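/- Smallness additivity for bushy trees: if B₁,…,B_n ⊆ ℕ^{<ℕ} are sets of strings and g₁,…,g_n : ℕ → ℕ are functions such that each B_i is g_i-small above a string σ, then ⋃_i B_i is (∑_i g_i)-small above σ. -/

import Mathlib

/-!
Induct on the height of a tree witnessing that `⋃ i, B i` is `(∑ i, g i)`-big above `σ`, showing
that each node `τ` above `σ` has some `i` with `B i` being `g i`-big above `τ`. A leaf lies in
some `B i`. An inner node has at least `∑ i, g i |τ|` children, each labelled by such an `i`, so by
pigeonhole some `i` labels at least `g i |τ|` of them, and grafting the corresponding witness
trees below `τ` shows that `B i` is `g i`-big above `τ`.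
-/

open Classical Filter

noncomputable section


/-- `T` is a finite tree `h`-bushy above `σ`: every element is increasing and
comparable with `σ`, and every non-leaf extending `σ` has at least `h(|τ|)`
immediate children. -/
def IsBushy (h : ℕ → ℕ) (σ : List ℕ) (T : Finset (List ℕ)) : Prop :=
  (∀ τ ∈ T, List.Pairwise (· < ·) τ ∧ (σ <+: τ ∨ τ <+: σ)) ∧
  ∀ τ ∈ T, σ <+: τ → (∃ x : ℕ, τ ++ [x] ∈ T) →
    h τ.length ≤ {x : ℕ | τ ++ [x] ∈ T}.ncard

/-- `B` is `h`-big above `σ`: some finite tree `h`-bushy above `σ` has all its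
leaves in `B`. -/
def BigAbove (h : ℕ → ℕ) (σ : List ℕ) (B : Set (List ℕ)) : Prop :=
  ∃ T : Finset (List ℕ), σ ∈ T ∧ IsBushy h σ T ∧
    ∀ τ ∈ T, (∀ x : ℕ, τ ++ [x] ∉ T) → τ ∈ B

/-- `B` is `h`-small above `σ`. -/
def SmallAbove (h : ℕ → ℕ) (σ : List ℕ) (B : Set (List ℕ)) : Prop :=
  ¬ BigAbove h σ B

open Finset

theorem Finset.exists_le_card_filter_of_sum_le_card {α ι : Type*} [Fintype ι] {s : Finset α}
    {P : α → ι → Prop} (w : ι → ℕ) (hP : ∀ a ∈ s, ∃ i, P a i) (hs : s.Nonempty)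
    (hw : ∑ i, w i ≤ #s) : ∃ i, w i ≤ #{a ∈ s | P a i} ∧ ∃ a ∈ s, P a i := by
  by_contra! hcon
  obtain ⟨a₀, ha₀⟩ := hs
  obtain ⟨i₀, hi₀⟩ := hP a₀ ha₀
  have hcover : #s ≤ ∑ i, #{a ∈ s | P a i} :=
    calc #s ≤ #(univ.biUnion fun i => {a ∈ s | P a i}) :=
          card_le_card fun a ha => by simpa [ha] using hP a ha
      _ ≤ _ := card_biUnion_le
  have hlt : ∑ i, #{a ∈ s | P a i} < ∑ i, w i := by
    refine sum_lt_sum (fun i _ => ?_) ⟨i₀, mem_univ _, ?_⟩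
    · by_contra! hi
      have hempty : {a ∈ s | P a i} = ∅ :=
        filter_eq_empty_iff.2 fun a ha => hcon i hi.le a ha
      simp [hempty] at hi
    · by_contra! hi
      exact hcon i₀ hi a₀ ha₀ hi₀
  omega

theorem List.eq_of_append_singleton_prefix {α : Type*} {τ ρ : List α} {x y : α}
    (hx : τ ++ [x] <+: ρ) (hy : τ ++ [y] <+: ρ) : x = y := by
  have h := (prefix_of_prefix_length_le hx hy (by simp)).eq_of_length (by simp)
  simpa using h

def children (T : Finset (List ℕ)) (τ : List ℕ) : Finset ℕ :=
  T.preimage (fun x => τ ++ [x]) fun _ _ _ _ h => by simpa using h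

@[simp]
theorem mem_children {T : Finset (List ℕ)} {τ : List ℕ} {x : ℕ} :
    x ∈ children T τ ↔ τ ++ [x] ∈ T :=
  mem_preimage

theorem ncard_setOf_append_mem (T : Finset (List ℕ)) (τ : List ℕ) :
    {x : ℕ | τ ++ [x] ∈ T}.ncard = #(children T τ) := by
  rw [← Set.ncard_coe_finset]
  congr 1
  ext
  simp

theorem children_mono {T T' : Finset (List ℕ)} (hT : T ⊆ T') (τ : List ℕ) :
    children T τ ⊆ children T' τ :=
  fun _ hx => mem_children.2 (hT (mem_children.1 hx))

theorem IsBushy.prefix_or_extends {h : ℕ → ℕ} {τ ρ : List ℕ} {x : ℕ} {T : Finset (List ℕ)}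
    (hT : IsBushy h (τ ++ [x]) T) (hρ : ρ ∈ T) : ρ <+: τ ∨ τ ++ [x] <+: ρ := by
  rcases (hT.1 ρ hρ).2 with hext | hpre
  · exact Or.inr hext
  · rcases List.prefix_concat_iff.1 hpre with rfl | hpre
    · exact Or.inr (List.prefix_refl _)
    · exact Or.inl hpre

namespace BigAbove

variable {h : ℕ → ℕ} {τ : List ℕ} {B : Set (List ℕ)}

theorem of_mem (hτ : τ.Pairwise (· < ·)) (hB : τ ∈ B) : BigAbove h τ B := by
  refine ⟨{τ}, mem_singleton_self τ, ⟨?_, ?_⟩, ?_⟩ <;> intro ρ hρ <;> rw [mem_singleton] at hρ <;>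
    subst hρ
  · exact ⟨hτ, Or.inl (List.prefix_refl _)⟩
  · rintro - ⟨x, hx⟩
    simpa using congrArg List.length (mem_singleton.1 hx)
  · exact fun _ => hB

theorem of_children (S : Finset ℕ) (hS : S.Nonempty) (hcard : h τ.length ≤ #S)
    (hbig : ∀ x ∈ S, BigAbove h (τ ++ [x]) B) : BigAbove h τ B := by
  choose W hroot hbushy hleaf using hbig
  set T := insert τ (S.attach.biUnion fun x => W x.1 x.2)
  have mem_T : ∀ ρ, ρ ∈ T ↔ ρ = τ ∨ ∃ x hx, ρ ∈ W x hx := by simp [T]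
  have W_sub : ∀ x hx, W x hx ⊆ T := fun x hx ρ hρ => (mem_T ρ).2 (Or.inr ⟨x, hx, hρ⟩)
  have mem_W : ∀ x hx ρ, ρ ∈ T → τ ++ [x] <+: ρ → ρ ∈ W x hx := by
    intro x hx ρ hρ hxρ
    have hlen := hxρ.length_le
    simp only [List.length_append, List.length_singleton] at hlen
    rcases (mem_T ρ).1 hρ with rfl | ⟨y, hy, hρW⟩
    · omega
    rcases (hbushy y hy).prefix_or_extends hρW with hρτ | hyρ
    · have := hρτ.length_le
      omega
    · obtain rfl := List.eq_of_append_singleton_prefix hyρ hxρ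
      exact hρW
  have above : ∀ ρ ∈ T, τ <+: ρ → ρ = τ ∨ ∃ x hx, τ ++ [x] <+: ρ ∧ ρ ∈ W x hx := by
    intro ρ hρ hτρ
    rcases (mem_T ρ).1 hρ with rfl | ⟨x, hx, hρW⟩
    · exact Or.inl rfl
    rcases (hbushy x hx).prefix_or_extends hρW with hρτ | hxρ
    · exact Or.inl (hρτ.eq_of_length (le_antisymm hρτ.length_le hτρ.length_le))
    · exact Or.inr ⟨x, hx, hxρ, hρW⟩
  refine ⟨T, mem_insert_self _ _, ⟨fun ρ hρ => ?_, fun ρ hρ hτρ ⟨y, hy⟩ => ?_⟩,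
    fun ρ hρ hno => ?_⟩
  · rcases (mem_T ρ).1 hρ with rfl | ⟨x, hx, hρW⟩
    · obtain ⟨x, hx⟩ := hS
      exact ⟨(List.pairwise_append.1 ((hbushy x hx).1 _ (hroot x hx)).1).1,
        Or.inl (List.prefix_refl _)⟩
    · refine ⟨((hbushy x hx).1 ρ hρW).1, ?_⟩
      rcases (hbushy x hx).prefix_or_extends hρW with hρτ | hxρ
      · exact Or.inr hρτ
      · exact Or.inl ((List.prefix_append τ [x]).trans hxρ)
  · rw [ncard_setOf_append_mem]
    rcases above ρ hρ hτρ with rfl | ⟨x, hx, hxρ, hρW⟩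
    · exact hcard.trans (card_le_card fun x hx => mem_children.2 (W_sub x hx (hroot x hx)))
    · have hyW := mem_W x hx _ hy (hxρ.trans (List.prefix_append ρ [y]))
      have := (hbushy x hx).2 ρ hρW hxρ ⟨y, hyW⟩
      rw [ncard_setOf_append_mem] at this
      exact this.trans (card_le_card (children_mono (W_sub x hx) ρ))
  · rcases (mem_T ρ).1 hρ with rfl | ⟨x, hx, hρW⟩
    · obtain ⟨x, hx⟩ := hS
      exact absurd (W_sub x hx (hroot x hx)) (hno x)
    · exact hleaf x hx ρ hρW fun y hy => hno y (W_sub x hx hy)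

end BigAbove

variable {ι : Type*} [Fintype ι] {g : ι → ℕ → ℕ} {B : ι → Set (List ℕ)}

theorem IsBushy.exists_bigAbove {σ : List ℕ} {T : Finset (List ℕ)}
    (hT : IsBushy (fun m => ∑ i, g i m) σ T)
    (hleaf : ∀ τ ∈ T, (∀ x, τ ++ [x] ∉ T) → τ ∈ ⋃ i, B i)
    (τ : List ℕ) (hτ : τ ∈ T) (hστ : σ <+: τ) : ∃ i, BigAbove (g i) τ (B i) := by
  by_cases hinner : ∃ x, τ ++ [x] ∈ T
  swap
  · obtain ⟨i, hi⟩ := Set.mem_iUnion.1 (hleaf τ hτ (not_exists.1 hinner))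
    exact ⟨i, .of_mem (hT.1 τ hτ).1 hi⟩
  obtain ⟨x₀, hx₀⟩ := hinner
  have ih : ∀ x ∈ children T τ, ∃ i, BigAbove (g i) (τ ++ [x]) (B i) := fun x hx =>
    hT.exists_bigAbove hleaf (τ ++ [x]) (mem_children.1 hx) (hστ.trans (List.prefix_append _ _))
  have hcard := hT.2 τ hτ hστ ⟨x₀, hx₀⟩
  rw [ncard_setOf_append_mem] at hcard
  obtain ⟨i, hi, x, hx, hxi⟩ := exists_le_card_filter_of_sum_le_card (fun i => g i τ.length) ih
    ⟨x₀, mem_children.2 hx₀⟩ hcard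
  exact ⟨i, .of_children _ ⟨x, mem_filter.2 ⟨hx, hxi⟩⟩ hi fun y hy => (mem_filter.1 hy).2⟩
termination_by T.sup List.length - τ.length
decreasing_by
  have := le_sup (f := List.length) (mem_children.1 hx)
  simp only [List.length_append, List.length_singleton] at this ⊢
  omega

theorem BigAbove.exists_of_sum_iUnion {σ : List ℕ}
    (hbig : BigAbove (fun m => ∑ i, g i m) σ (⋃ i, B i)) : ∃ i, BigAbove (g i) σ (B i) :=
  let ⟨_, hσ, hT, hleaf⟩ := hbig
  hT.exists_bigAbove hleaf σ hσ (List.prefix_refl σ)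

theorem stmt8 (n : ℕ) (B : Fin n → Set (List ℕ)) (g : Fin n → ℕ → ℕ)
    (σ : List ℕ) (h : ∀ i, SmallAbove (g i) σ (B i)) :
    SmallAbove (fun m => ∑ i, g i m) σ (⋃ i, B i) := fun hbig =>
  let ⟨i, hi⟩ := hbig.exists_of_sum_iUnion
  h i hi

end
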